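/- Let F̃ be a Minkowski integrand that is positively 1-homogeneous, smooth on ℝ^{n+1} ∖ {0}, positive on nonzero vectors, and elliptic. Then F̃ is a convex function on ℝ^{n+1}. -/

import Mathlib

open RealInnerProductSpace

noncomputable section

/-- Euclidean space ℝ^{n+1}. -/
abbrev Euc (n : ℕ) := EuclideanSpace ℝ (Fin (n + 1))

/-- A Minkowski integrand: `F 0 = 0`, smooth away from the origin,
positively 1-homogeneous, and positive on nonzero vectors. -/
def MinkowskiIntegrand (n : ℕ) (F : Euc n → ℝ) : Prop :=
  F 0 = 0 ∧ ContDiffOn ℝ (⊤ : ℕ∞) F {0}ᶜ ∧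
    (∀ s : ℝ, 0 < s → ∀ x : Euc n, F (s • x) = s * F x) ∧
    ∀ x : Euc n, x ≠ 0 → 0 < F x

/-- Ellipticity: the second Fréchet derivative at any unit vector is positive definite
on the orthogonal complement of that vector. -/
def Elliptic (n : ℕ) (F : Euc n → ℝ) : Prop :=
  ∀ x v : Euc n, ‖x‖ = 1 → v ≠ 0 → ⟪x, v⟫ = 0 →
    0 < iteratedFDeriv ℝ 2 F x ![v, v]

/-- The dual function `F^o(y) = sup {⟨y, ξ⟩ / F(ξ) : ‖ξ‖ = 1}`. -/
def dualF (n : ℕ) (F : Euc n → ℝ) (y : Euc n) : ℝ :=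
  sSup {r : ℝ | ∃ ξ : Euc n, ‖ξ‖ = 1 ∧ r = ⟪y, ξ⟫ / F ξ}

section Aux

variable {n : ℕ} {F : Euc n → ℝ}
  (h0 : F 0 = 0)
  (hsm : ContDiffOn ℝ (⊤ : ℕ∞) F {0}ᶜ)
  (hom : ∀ s : ℝ, 0 < s → ∀ x : Euc n, F (s • x) = s * F x)

include hsm in
lemma cdAt {z : Euc n} (hz : z ≠ 0) : ContDiffAt ℝ (⊤ : ℕ∞) F z :=
  hsm.contDiffAt (isOpen_compl_singleton.mem_nhds hz)

include hsm in
lemma diffAt {z : Euc n} (hz : z ≠ 0) : DifferentiableAt ℝ F z :=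
  (cdAt hsm hz).differentiableAt (by simp)

include hsm in
lemma diffAt' {z : Euc n} (hz : z ≠ 0) : DifferentiableAt ℝ (fderiv ℝ F) z :=
  ((cdAt hsm hz).fderiv_right (m := 1) ((by exact WithTop.coe_le_coe.mpr (le_top : ((1 + 1 : ℕ) : ℕ∞) ≤ ⊤)))).differentiableAt one_ne_zero

-- Lemma A : 0-homogeneity of fderiv
include h0 hsm hom in
lemma fderiv_homog {z : Euc n} (hz : z ≠ 0) {s : ℝ} (hs : 0 < s) :
    fderiv ℝ F (s • z) = fderiv ℝ F z := by
  have hsz : s • z ≠ 0 := smul_ne_zero (ne_of_gt hs) hz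
  have h1 : HasFDerivAt (fun x : Euc n => F (s • x))
      ((fderiv ℝ F (s • z)).comp (s • ContinuousLinearMap.id ℝ (Euc n))) z :=
    (diffAt hsm hsz).hasFDerivAt.comp z ((hasFDerivAt_id z).const_smul s)
  have h2 : HasFDerivAt (fun x : Euc n => s * F x) (s • fderiv ℝ F z) z :=
    (diffAt hsm hz).hasFDerivAt.const_mul s
  have heq : (fun x : Euc n => F (s • x)) = fun x => s * F x := by
    funext x; exact hom s hs x
  rw [heq] at h1
  have h3 := h1.unique h2
  ext v
  have := congrArg (fun (L : Euc n →L[ℝ] ℝ) => L v) h3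
  simp only [ContinuousLinearMap.comp_apply, ContinuousLinearMap.smul_apply,
    ContinuousLinearMap.id_apply, smul_eq_mul] at this
  have hs' : s ≠ 0 := ne_of_gt hs
  -- this : fderiv F (s•z) (s • v) = s * fderiv F z v
  rw [map_smul] at this
  simpa [smul_eq_mul, hs'] using mul_left_cancel₀ hs' this

end Aux

section Aux2
set_option linter.unusedSectionVars false

variable {n : ℕ} {F : Euc n → ℝ}
  (h0 : F 0 = 0)
  (hsm : ContDiffOn ℝ (⊤ : ℕ∞) F {0}ᶜ)
  (hom : ∀ s : ℝ, 0 < s → ∀ x : Euc n, F (s • x) = s * F x)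

include h0 hsm hom

-- Lemma B : radial direction in kernel
lemma snd_radial {z : Euc n} (hz : z ≠ 0) : fderiv ℝ (fderiv ℝ F) z z = 0 := by
  have h1 : HasFDerivAt (fderiv ℝ F) (fderiv ℝ (fderiv ℝ F) z) z :=
    (diffAt' hsm hz).hasFDerivAt
  have h2 : HasDerivAt (fun s : ℝ => s • z) z 1 := by
    simpa using (hasDerivAt_id (1:ℝ)).smul_const z
  have hc : HasDerivAt (fun s : ℝ => fderiv ℝ F (s • z)) (fderiv ℝ (fderiv ℝ F) z z) 1 := by
    have h1' : HasFDerivAt (fderiv ℝ F) (fderiv ℝ (fderiv ℝ F) z) ((1:ℝ) • z) := by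
      simpa using h1
    exact h1'.comp_hasDerivAt (1:ℝ) h2
  have heq : (fun s : ℝ => fderiv ℝ F (s • z)) =ᶠ[nhds (1:ℝ)] fun _ => fderiv ℝ F z := by
    filter_upwards [Ioi_mem_nhds (by norm_num : (0:ℝ) < 1)] with s hs
    exact fderiv_homog h0 hsm hom hz hs
  have hc' : HasDerivAt (fun s : ℝ => fderiv ℝ F (s • z)) 0 1 :=
    (hasDerivAt_const (1:ℝ) (fderiv ℝ F z)).congr_of_eventuallyEq heq
  exact hc.unique hc'

-- Lemma C : symmetry
lemma snd_symm {z : Euc n} (hz : z ≠ 0) (v w : Euc n) :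
    fderiv ℝ (fderiv ℝ F) z v w = fderiv ℝ (fderiv ℝ F) z w v := by
  apply second_derivative_symmetric_of_eventually (f := F)
  · filter_upwards [isOpen_compl_singleton.mem_nhds hz] with y hy
    exact (diffAt hsm hy).hasFDerivAt
  · exact (diffAt' hsm hz).hasFDerivAt

-- Lemma D : -1 homogeneity of second derivative
lemma snd_homog {z : Euc n} (hz : z ≠ 0) {s : ℝ} (hs : 0 < s) :
    s • fderiv ℝ (fderiv ℝ F) (s • z) = fderiv ℝ (fderiv ℝ F) z := by
  have hsz : s • z ≠ 0 := smul_ne_zero (ne_of_gt hs) hz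
  have h1 : HasFDerivAt (fun x : Euc n => fderiv ℝ F (s • x))
      ((fderiv ℝ (fderiv ℝ F) (s • z)).comp (s • ContinuousLinearMap.id ℝ (Euc n))) z :=
    (diffAt' hsm hsz).hasFDerivAt.comp z ((hasFDerivAt_id z).const_smul s)
  have heq : (fun x : Euc n => fderiv ℝ F (s • x)) =ᶠ[nhds z] fderiv ℝ F := by
    filter_upwards [isOpen_compl_singleton.mem_nhds hz] with y hy
    exact fderiv_homog h0 hsm hom hy hs
  have h1' : HasFDerivAt (fderiv ℝ F)
      ((fderiv ℝ (fderiv ℝ F) (s • z)).comp (s • ContinuousLinearMap.id ℝ (Euc n))) z :=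
    h1.congr_of_eventuallyEq heq.symm
  have h3 := h1'.unique (diffAt' hsm hz).hasFDerivAt
  ext v w
  have := congrArg (fun (L : Euc n →L[ℝ] (Euc n →L[ℝ] ℝ)) => L v w) h3
  simpa [mul_comm] using this

-- Lemma E : second derivative is positive semidefinite at every nonzero point
lemma snd_nonneg
    (hell : ∀ x v : Euc n, ‖x‖ = 1 → v ≠ 0 → ⟪x, v⟫ = 0 →
      0 < iteratedFDeriv ℝ 2 F x ![v, v])
    {z : Euc n} (hz : z ≠ 0) (v : Euc n) :
    0 ≤ fderiv ℝ (fderiv ℝ F) z v v := by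
  set s : ℝ := ‖z‖ with hs
  have hspos : 0 < s := norm_pos_iff.mpr hz
  set u : Euc n := s⁻¹ • z with hu
  have hzu : z = s • u := by
    rw [hu, smul_smul, mul_inv_cancel₀ (ne_of_gt hspos), one_smul]
  have hunorm : ‖u‖ = 1 := by
    rw [hu, norm_smul]
    simp [hs, norm_inv, inv_mul_cancel₀ (ne_of_gt hspos)]
    exact inv_mul_cancel₀ (norm_ne_zero_iff.mpr hz)
  have hune : u ≠ 0 := by
    intro h; rw [h, norm_zero] at hunorm; norm_num at hunorm
  -- reduce to the unit vector u
  have hred : fderiv ℝ (fderiv ℝ F) z v v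
      = s⁻¹ * fderiv ℝ (fderiv ℝ F) u v v := by
    have := snd_homog h0 hsm hom hune hspos
    rw [hzu, ← this]
    simp only [ContinuousLinearMap.smul_apply, smul_eq_mul]
    rw [← mul_assoc, inv_mul_cancel₀ (ne_of_gt hspos), one_mul]
  rw [hred]
  have h1 : 0 ≤ fderiv ℝ (fderiv ℝ F) u v v := by
    set a : ℝ := ⟪u, v⟫ with ha
    set w : Euc n := v - a • u with hw
    have hvw : v = w + a • u := by rw [hw]; abel
    have hw0 : ⟪u, w⟫ = 0 := by
      rw [hw, inner_sub_right, real_inner_smul_right]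
      have : ⟪u, u⟫ = (1:ℝ) := by
        rw [real_inner_self_eq_norm_sq, hunorm]; norm_num
      rw [this, ha]; ring
    have hker : ∀ x : Euc n, fderiv ℝ (fderiv ℝ F) u u x = 0 := by
      intro x
      have := snd_radial h0 hsm hom hune
      rw [this]; rfl
    have hker' : ∀ x : Euc n, fderiv ℝ (fderiv ℝ F) u x u = 0 := fun x => by
      rw [snd_symm h0 hsm hom hune, hker]
    have hexp : fderiv ℝ (fderiv ℝ F) u v v = fderiv ℝ (fderiv ℝ F) u w w := by
      rw [hvw]
      simp only [map_add, map_smul, ContinuousLinearMap.add_apply,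
        ContinuousLinearMap.smul_apply, hker, hker', smul_eq_mul]
      ring
    rw [hexp]
    rcases eq_or_ne w 0 with hw0' | hw0'
    · simp [hw0']
    · have := hell u w hunorm hw0' hw0
      rw [iteratedFDeriv_two_apply] at this
      simpa using this.le
  positivity

-- Convexity inequality along segments avoiding the origin
lemma seg_convex
    (hell : ∀ x v : Euc n, ‖x‖ = 1 → v ≠ 0 → ⟪x, v⟫ = 0 →
      0 < iteratedFDeriv ℝ 2 F x ![v, v])
    {x y : Euc n} (hseg : ∀ t ∈ Set.Icc (0:ℝ) 1, x + t • (y - x) ≠ 0)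
    {a b : ℝ} (ha : 0 ≤ a) (hb : 0 ≤ b) (hab : a + b = 1) :
    F (a • x + b • y) ≤ a * F x + b * F y := by
  set γ : ℝ → Euc n := fun t => x + t • (y - x) with hγ
  set g : ℝ → ℝ := fun t => F (γ t) with hg
  set U : Set ℝ := {t : ℝ | γ t ≠ 0} with hUdef
  have hγcont : Continuous γ := by
    apply continuous_const.add (continuous_id.smul continuous_const)
  have hU : IsOpen U := isOpen_compl_singleton.preimage hγcont
  have hUIcc : Set.Icc (0:ℝ) 1 ⊆ U := hseg
  have hγ' : ∀ t : ℝ, HasDerivAt γ (y - x) t := fun t => by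
    simpa [hγ] using ((hasDerivAt_id t).smul_const (y - x)).const_add x
  have hg' : ∀ t ∈ U, HasDerivAt g (fderiv ℝ F (γ t) (y - x)) t := fun t ht =>
    (diffAt hsm ht).hasFDerivAt.comp_hasDerivAt t (hγ' t)
  set g1 : ℝ → ℝ := fun t => fderiv ℝ F (γ t) (y - x) with hg1def
  have hg1' : ∀ t ∈ U, HasDerivAt g1
      (fderiv ℝ (fderiv ℝ F) (γ t) (y - x) (y - x)) t := by
    intro t ht
    have h1 : HasDerivAt (fun s => fderiv ℝ F (γ s))
        (fderiv ℝ (fderiv ℝ F) (γ t) (y - x)) t :=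
      (diffAt' hsm ht).hasFDerivAt.comp_hasDerivAt t (hγ' t)
    have h2 := h1.clm_apply (hasDerivAt_const t (y - x))
    simpa only [map_zero, add_zero] using h2
  have hderivg : ∀ t ∈ U, deriv g t = g1 t := fun t ht => (hg' t ht).deriv
  have hdg : ∀ t ∈ U, HasDerivAt (deriv g)
      (fderiv ℝ (fderiv ℝ F) (γ t) (y - x) (y - x)) t := by
    intro t ht
    have hEq : deriv g =ᶠ[nhds t] g1 := by
      filter_upwards [hU.mem_nhds ht] with s hs using hderivg s hs
    exact (hg1' t ht).congr_of_eventuallyEq hEq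
  have hconv : ConvexOn ℝ (Set.Icc (0:ℝ) 1) g := by
    apply convexOn_of_deriv2_nonneg (convex_Icc 0 1)
    · intro t ht
      exact (hg' t (hUIcc ht)).differentiableAt.continuousAt.continuousWithinAt
    · intro t ht
      rw [interior_Icc] at ht
      exact (hg' t (hUIcc (Set.Ioo_subset_Icc_self ht))).differentiableAt.differentiableWithinAt
    · intro t ht
      rw [interior_Icc] at ht
      exact (hdg t (hUIcc (Set.Ioo_subset_Icc_self ht))).differentiableAt.differentiableWithinAt
    · intro t ht
      rw [interior_Icc] at ht
      have htU := hUIcc (Set.Ioo_subset_Icc_self ht)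
      have h2 : deriv^[2] g t = deriv (deriv g) t := by
        simp [Function.iterate_succ_apply']
      rw [h2, (hdg t htU).deriv]
      exact snd_nonneg h0 hsm hom hell htU (y - x)
  have h01 : (0:ℝ) ∈ Set.Icc (0:ℝ) 1 := by norm_num
  have h11 : (1:ℝ) ∈ Set.Icc (0:ℝ) 1 := by norm_num
  have := hconv.2 h01 h11 ha hb hab
  have hg0 : g (a • (0:ℝ) + b • 1) = F (a • x + b • y) := by
    have hb' : a • (0:ℝ) + b • (1:ℝ) = b := by simp
    rw [hb', hg]
    congr 1
    have hab' : a = 1 - b := by linarith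
    rw [hγ]
    simp only [smul_sub, hab', sub_smul, one_smul]
    abel
  have hgx : g 0 = F x := by simp [hg, hγ]
  have hgy : g 1 = F y := by simp [hg, hγ]
  rw [hg0, hgx, hgy] at this
  simpa using this

end Aux2

theorem statement_10 {n : ℕ} (hn : 1 ≤ n) (F : Euc n → ℝ)
    (hF : MinkowskiIntegrand n F) (hFell : Elliptic n F) :
    ConvexOn ℝ Set.univ F := by
  obtain ⟨h0, hsm, hom, hpos⟩ := hF
  refine ⟨convex_univ, ?_⟩
  intro x _ y _ a b ha hb hab
  rw [smul_eq_mul, smul_eq_mul]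
  rcases eq_or_lt_of_le ha with ha0 | ha0
  · have hb1 : b = 1 := by linarith
    simp [← ha0, hb1]
  rcases eq_or_lt_of_le hb with hb0 | hb0
  · have ha1 : a = 1 := by linarith
    simp [← hb0, ha1]
  by_cases hx : x = 0
  · subst hx
    rcases eq_or_ne y 0 with hy | hy
    · subst hy
      simp [h0]
    · have : F (b • y) = b * F y := hom b hb0 y
      simp only [smul_zero, zero_add, this, h0, mul_zero]
      linarith
  by_cases hy : y = 0
  · subst hy
    have : F (a • x) = a * F x := hom a ha0 x
    simp only [smul_zero, add_zero, this, h0, mul_zero]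
    linarith
  by_cases hseg : ∀ t ∈ Set.Icc (0:ℝ) 1, x + t • (y - x) ≠ 0
  · exact seg_convex h0 hsm hom hFell hseg ha hb hab
  · push_neg at hseg
    obtain ⟨t, ht, hzero⟩ := hseg
    have ht0 : t ≠ 0 := by
      intro h; subst h; simp at hzero; exact hx hzero
    have ht1 : t ≠ 1 := by
      intro h; subst h
      rw [one_smul] at hzero
      apply hy
      have : y = 0 := by
        have := hzero
        rw [add_sub_cancel] at this
        exact this
      exact this
    have htpos : 0 < t := lt_of_le_of_ne ht.1 (Ne.symm ht0)
    have htlt : t < 1 := lt_of_le_of_ne ht.2 ht1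
    -- y = (-c) • x with c = (1-t)/t > 0
    set c : ℝ := (1 - t) / t with hc
    have hcpos : 0 < c := div_pos (by linarith) htpos
    have h1 : t • y = (t - 1) • x := by
      have h' : x + (t • y - t • x) = 0 := by
        rw [← smul_sub]; exact hzero
      have h2 : t • y - t • x = -x := eq_neg_of_add_eq_zero_right h'
      have h'' : t • y = -x + t • x := sub_eq_iff_eq_add.mp h2
      rw [h'', sub_smul, one_smul]
      abel
    have hyx : y = (-c) • x := by
      calc y = t⁻¹ • (t • y) := by rw [smul_smul, inv_mul_cancel₀ ht0, one_smul]
        _ = t⁻¹ • ((t - 1) • x) := by rw [h1]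
        _ = (-c) • x := by
            rw [smul_smul]; congr 1
            rw [hc]; field_simp; ring
    have hcomb : a • x + b • y = (a - b * c) • x := by
      rw [hyx, smul_smul, ← add_smul]
      congr 1; ring
    have hFx : 0 < F x := hpos x hx
    have hFnx : 0 < F (-x) := hpos (-x) (neg_ne_zero.mpr hx)
    have hFy : F y = c * F (-x) := by
      rw [hyx]
      have h5 : (-c) • x = c • (-x) := by rw [smul_neg, neg_smul]
      rw [h5]
      exact hom c hcpos (-x)
    rcases lt_trichotomy (a - b * c) 0 with hd | hd | hd
    · have h4 : (a - b * c) • x = (b * c - a) • (-x) := by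
        rw [smul_neg, ← neg_smul]; congr 1; ring
      rw [hcomb, h4, hom (b * c - a) (by linarith) (-x), hFy]
      nlinarith
    · rw [hcomb, hd, zero_smul, h0, hFy]
      nlinarith
    · rw [hcomb, hom (a - b * c) hd x, hFy]
      nlinarith [mul_nonneg (mul_nonneg hb hcpos.le) hFx.le,
        mul_nonneg (mul_nonneg hb hcpos.le) hFnx.le]
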